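/- arXiv:2408.16416 — 5 statements merged into one kernel-verified Lean document; each statement's English description precedes it below -/
import Mathlib

section
/- Let E ∈ ℝ^{m×m} and D ∈ ℝ^{n×n} be symmetric positive definite and let Z ∈ ℝ^{m×n} have weighted SVD Z = Ũ Σ̃ Ṽᵀ with weighted singular values σ̃₁ ≥ σ̃₂ ≥ ⋯ ≥ 0. For r ≤ min(m,n), let Ũ_r, Ṽ_r be the first r columns of Ũ, Ṽ and Σ̃_r = diag(σ̃₁,…,σ̃_r). Then Ũ_r Σ̃_r Ṽ_rᵀ minimizes ‖Z − Y‖_B over all Y ∈ ℝ^{m×n} with rank(Y) ≤ r, where ‖·‖_B is the norm induced by the inner product ⟨X,Y⟩_B = trace((E X D)ᵀ Y). -/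
open Matrix

/-- The norm induced by the inner product `⟨X,Y⟩_B = trace((E X D)ᵀ Y)`. -/
noncomputable def normB {m n : ℕ} (E : Matrix (Fin m) (Fin m) ℝ)
    (D : Matrix (Fin n) (Fin n) ℝ) (X : Matrix (Fin m) (Fin n) ℝ) : ℝ :=
  Real.sqrt (Matrix.trace ((E * X * D)ᵀ * X))

section Auxiliary

lemma traceTT {m n : ℕ} (X : Matrix (Fin m) (Fin n) ℝ) :
    Matrix.trace (Xᵀ * X) = ∑ j : Fin n, ∑ i : Fin m, X i j ^ 2 := by
  simp [Matrix.trace, Matrix.mul_apply, Matrix.diag, sq]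

lemma traceTT_nonneg {m n : ℕ} (X : Matrix (Fin m) (Fin n) ℝ) :
    0 ≤ Matrix.trace (Xᵀ * X) := by
  rw [traceTT]; positivity

/-- Invariance of the weighted norm under the weighted-orthogonal factors. -/
lemma normB_conj {m n : ℕ} (E : Matrix (Fin m) (Fin m) ℝ) (D : Matrix (Fin n) (Fin n) ℝ)
    (hE : Eᵀ = E) (hD : Dᵀ = D)
    (U : Matrix (Fin m) (Fin m) ℝ) (V : Matrix (Fin n) (Fin n) ℝ)
    (hU : Uᵀ * E * U = 1) (hV : Vᵀ * D * V = 1)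
    (M : Matrix (Fin m) (Fin n) ℝ) :
    normB E D (U * M * Vᵀ) = Real.sqrt (Matrix.trace (Mᵀ * M)) := by
  unfold normB
  congr 1
  have hU' : Uᵀ * (E * U) = 1 := by rw [← Matrix.mul_assoc]; exact hU
  have h1 : (E * (U * M * Vᵀ) * D)ᵀ * (U * M * Vᵀ)
      = D * (V * (Mᵀ * ((Uᵀ * (E * U)) * (M * Vᵀ)))) := by
    simp only [Matrix.transpose_mul, Matrix.transpose_transpose, hE, hD, Matrix.mul_assoc]
  rw [h1, hU', Matrix.one_mul]
  have h2 : D * (V * (Mᵀ * (M * Vᵀ))) = (D * V) * (Mᵀ * M * Vᵀ) := by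
    simp only [Matrix.mul_assoc]
  rw [h2, Matrix.trace_mul_comm]
  have h3 : (Mᵀ * M * Vᵀ) * (D * V) = (Mᵀ * M) * (Vᵀ * D * V) := by
    simp only [Matrix.mul_assoc]
  rw [h3, hV, Matrix.mul_one]

/-- From a matrix of rank at most `r` we can extract an orthonormal family spanning
(part of) its kernel, with at least `n - r` columns. -/
lemma exists_W {m n r : ℕ} (B : Matrix (Fin m) (Fin n) ℝ) (hB : B.rank ≤ r) (hrn : r ≤ n) :
    ∃ (k : ℕ) (W : Matrix (Fin n) (Fin k) ℝ),
      n - r ≤ k ∧ Wᵀ * W = 1 ∧ B * W = 0 := by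
  set e := (WithLp.linearEquiv 2 ℝ (Fin n → ℝ)) with he
  set f : EuclideanSpace ℝ (Fin n) →ₗ[ℝ] (Fin m → ℝ) := B.mulVecLin ∘ₗ e.toLinearMap with hf
  set K := LinearMap.ker f with hK
  have hrange : LinearMap.range f = LinearMap.range B.mulVecLin := by
    rw [hf, LinearMap.range_comp_of_range_eq_top]
    exact LinearEquiv.range e
  have hdim : Module.finrank ℝ (LinearMap.range f) + Module.finrank ℝ K = n := by
    rw [hK]
    have := LinearMap.finrank_range_add_finrank_ker f
    simpa using this
  have hkge : n - r ≤ Module.finrank ℝ K := by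
    have h1 : Module.finrank ℝ (LinearMap.range f) ≤ r := by
      rw [hrange]; exact hB
    omega
  set k := Module.finrank ℝ K with hk
  set ob := stdOrthonormalBasis ℝ K with hob
  refine ⟨k, Matrix.of (fun i j => (ob j : EuclideanSpace ℝ (Fin n)) i), hkge, ?_, ?_⟩
  · ext j j'
    have := orthonormal_iff_ite.mp ob.orthonormal j j'
    rw [Submodule.coe_inner] at this
    simp only [PiLp.inner_apply, RCLike.inner_apply, conj_trivial] at this
    simp only [Matrix.mul_apply, Matrix.transpose_apply, Matrix.of_apply]
    refine (Finset.sum_congr rfl fun x _ => mul_comm _ _).trans (this.trans ?_)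
    exact (Matrix.one_apply (i := j) (j := j')).symm
  · ext i j
    have hker : f (ob j : EuclideanSpace ℝ (Fin n)) = 0 := (ob j).2
    have : B.mulVec (fun i => (ob j : EuclideanSpace ℝ (Fin n)) i) = 0 := by
      exact hker
    simp only [Matrix.mul_apply, Matrix.of_apply, Matrix.zero_apply]
    have := congrFun this i
    simpa [Matrix.mulVec, dotProduct] using this

lemma sum_castLE {m r : ℕ} (h : r ≤ m) (f : Fin m → ℝ)
    (hf : ∀ a : Fin m, r ≤ (a : ℕ) → f a = 0) :
    ∑ a : Fin m, f a = ∑ a : Fin r, f (Fin.castLE h a) := by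
  set g : ℕ → ℝ := fun a => if ha : a < m then f ⟨a, ha⟩ else 0 with hg
  have h1 : ∑ a : Fin m, f a = ∑ a ∈ Finset.range m, g a := by
    rw [← Fin.sum_univ_eq_sum_range]
    exact Finset.sum_congr rfl fun a _ => by simp [hg, a.isLt]
  have h2 : ∑ a : Fin r, f (Fin.castLE h a) = ∑ a ∈ Finset.range r, g a := by
    rw [← Fin.sum_univ_eq_sum_range]
    refine Finset.sum_congr rfl fun a _ => ?_
    have hh : (a : ℕ) < m := lt_of_lt_of_le a.isLt h
    simp only [hg, dif_pos hh]
    rfl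
  rw [h1, h2]
  exact (Finset.sum_subset (Finset.range_subset_range.mpr h) fun x hx hxr => by
    simp only [Finset.mem_range] at hx hxr
    simp only [hg, dif_pos hx]
    exact hf ⟨x, hx⟩ (by simpa using hxr)).symm

/-- The truncated product equals the full product against the truncated core matrix. -/
lemma trunc_eq {m n r : ℕ} (hrm : r ≤ m) (hrn : r ≤ n)
    (U : Matrix (Fin m) (Fin m) ℝ) (V : Matrix (Fin n) (Fin n) ℝ)
    (S : Matrix (Fin m) (Fin n) ℝ) :
    U.submatrix id (Fin.castLE hrm) * S.submatrix (Fin.castLE hrm) (Fin.castLE hrn)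
        * (V.submatrix id (Fin.castLE hrn))ᵀ
      = U * (Matrix.of fun (a : Fin m) (b : Fin n) =>
          if (a : ℕ) < r ∧ (b : ℕ) < r then S a b else 0) * Vᵀ := by
  ext i j
  simp only [Matrix.mul_apply, Matrix.submatrix_apply, Matrix.transpose_apply,
    Matrix.of_apply, id_eq]
  rw [sum_castLE hrn
    (fun b : Fin n => (∑ a : Fin m, U i a * if (a : ℕ) < r ∧ (b : ℕ) < r then S a b else 0) * V j b)
    (fun b hb => by
      beta_reduce
      rw [Finset.sum_eq_zero fun a _ => by rw [if_neg (by omega), mul_zero], zero_mul])]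
  refine (Finset.sum_congr rfl fun x _ => ?_).symm
  congr 1
  rw [sum_castLE hrm
    (fun a : Fin m => U i a * if (a : ℕ) < r ∧ ((Fin.castLE hrn x : Fin n) : ℕ) < r then S a (Fin.castLE hrn x) else 0)
    (fun a ha => by beta_reduce; rw [if_neg (by omega), mul_zero])]
  refine Finset.sum_congr rfl fun a _ => ?_
  rw [if_pos ⟨by simpa using a.isLt, by simpa using x.isLt⟩]

section Core
variable {m n r : ℕ} (S : Matrix (Fin m) (Fin n) ℝ)

lemma lam_eq (hSdiag : ∀ (i : Fin m) (j : Fin n), (i : ℕ) ≠ (j : ℕ) → S i j = 0)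
    (j : Fin n) :
    ∑ i : Fin m, S i j ^ 2 = if h : (j : ℕ) < m then S ⟨j, h⟩ j ^ 2 else 0 := by
  split_ifs with h
  · exact Finset.sum_eq_single (⟨j, h⟩ : Fin m)
      (fun i _ hi => by rw [hSdiag i j (by simpa [Fin.ext_iff] using hi), zero_pow two_ne_zero])
      (by simp)
  · exact Finset.sum_eq_zero fun i _ => by
      rw [hSdiag i j (by omega), zero_pow two_ne_zero]

lemma lam_anti (hSdiag : ∀ (i : Fin m) (j : Fin n), (i : ℕ) ≠ (j : ℕ) → S i j = 0)
    (hSnn : ∀ (i : Fin m) (j : Fin n), (i : ℕ) = (j : ℕ) → 0 ≤ S i j)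
    (hSmono : ∀ (i i' : Fin m) (j j' : Fin n), (i : ℕ) = (j : ℕ) → (i' : ℕ) = (j' : ℕ) →
      (i : ℕ) ≤ (i' : ℕ) → S i' j' ≤ S i j)
    {j j' : Fin n} (hjj : (j : ℕ) ≤ (j' : ℕ)) :
    ∑ i : Fin m, S i j' ^ 2 ≤ ∑ i : Fin m, S i j ^ 2 := by
  rw [lam_eq S hSdiag, lam_eq S hSdiag]
  split_ifs with h1 h2 h2
  · have hle := hSmono ⟨j, by omega⟩ ⟨j', h1⟩ j j' rfl rfl hjj
    have hnn := hSnn ⟨j', h1⟩ j' rfl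
    nlinarith
  · omega
  · positivity
  · exact le_refl _

/-- The key inequality: the tail sum of squared singular values bounds from below the
squared distance to any matrix of rank at most `r`. -/
lemma EY_key (hrn : r ≤ n)
    (hSdiag : ∀ (i : Fin m) (j : Fin n), (i : ℕ) ≠ (j : ℕ) → S i j = 0)
    (hSnn : ∀ (i : Fin m) (j : Fin n), (i : ℕ) = (j : ℕ) → 0 ≤ S i j)
    (hSmono : ∀ (i i' : Fin m) (j j' : Fin n), (i : ℕ) = (j : ℕ) → (i' : ℕ) = (j' : ℕ) →
      (i : ℕ) ≤ (i' : ℕ) → S i' j' ≤ S i j)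
    (B : Matrix (Fin m) (Fin n) ℝ) (hB : B.rank ≤ r) :
    (∑ j : Fin n, if r ≤ (j : ℕ) then (∑ i : Fin m, S i j ^ 2) else 0)
      ≤ Matrix.trace ((S - B)ᵀ * (S - B)) := by
  obtain ⟨k, W, hkge, hWo, hBW⟩ := exists_W B hB hrn
  set lam : Fin n → ℝ := fun j => ∑ i : Fin m, S i j ^ 2 with hlam
  have hlam_nonneg : ∀ j, 0 ≤ lam j := fun j => by rw [hlam]; positivity
  set M := S - B with hM
  set P := W * Wᵀ with hP
  have hPsymm : Pᵀ = P := by rw [hP, Matrix.transpose_mul, Matrix.transpose_transpose]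
  have hPP : P * P = P := by
    rw [hP]
    calc W * Wᵀ * (W * Wᵀ) = W * (Wᵀ * W) * Wᵀ := by simp only [Matrix.mul_assoc]
    _ = W * Wᵀ := by rw [hWo, Matrix.mul_one]
  have hMW : M * W = S * W := by rw [hM, Matrix.sub_mul, hBW, sub_zero]
  have hsym : ∀ a b, P b a = P a b := fun a b => by
    conv_rhs => rw [← hPsymm, Matrix.transpose_apply]
  have hp_nonneg : ∀ j, 0 ≤ P j j := fun j => by
    rw [hP]
    simp only [Matrix.mul_apply, Matrix.transpose_apply, ← sq]
    positivity
  have hp_le_one : ∀ j, P j j ≤ 1 := by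
    intro j
    have h1 : P j j = ∑ j', (P j j') ^ 2 := by
      conv_lhs => rw [← hPP]
      rw [Matrix.mul_apply]
      exact Finset.sum_congr rfl fun j' _ => by rw [hsym j' j, sq]
    have h2 : (P j j) ^ 2 ≤ ∑ j', (P j j') ^ 2 :=
      Finset.single_le_sum (f := fun j' => (P j j') ^ 2) (fun _ _ => sq_nonneg _)
        (Finset.mem_univ j)
    nlinarith [hp_nonneg j]
  have hsum_p : ∑ j, P j j = (k : ℝ) := by
    have h : Matrix.trace P = (k : ℝ) := by
      rw [hP, Matrix.trace_mul_comm, hWo, Matrix.trace_one]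
      simp
    simpa [Matrix.trace, Matrix.diag] using h
  have key1 : Matrix.trace (Mᵀ * M * P) ≤ Matrix.trace (Mᵀ * M) := by
    have hQ : (1 - P) * (1 - P)ᵀ = 1 - P := by
      rw [Matrix.transpose_sub, Matrix.transpose_one, hPsymm]
      simp only [Matrix.mul_sub, Matrix.sub_mul, hPP, Matrix.mul_one, Matrix.one_mul]
      abel
    have htr : Matrix.trace ((M * (1 - P))ᵀ * (M * (1 - P)))
        = Matrix.trace (Mᵀ * M * (1 - P)) := by
      rw [Matrix.transpose_mul]
      calc Matrix.trace ((1 - P)ᵀ * Mᵀ * (M * (1 - P)))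
          = Matrix.trace ((1 - P)ᵀ * (Mᵀ * (M * (1 - P)))) := by rw [Matrix.mul_assoc]
        _ = Matrix.trace ((Mᵀ * (M * (1 - P))) * (1 - P)ᵀ) := Matrix.trace_mul_comm _ _
        _ = Matrix.trace (Mᵀ * M * ((1 - P) * (1 - P)ᵀ)) := by simp only [Matrix.mul_assoc]
        _ = Matrix.trace (Mᵀ * M * (1 - P)) := by rw [hQ]
    have hdecomp : Matrix.trace (Mᵀ * M)
        = Matrix.trace (Mᵀ * M * P) + Matrix.trace (Mᵀ * M * (1 - P)) := by
      rw [← Matrix.trace_add, ← Matrix.mul_add]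
      simp
    have hnn : 0 ≤ Matrix.trace (Mᵀ * M * (1 - P)) := htr ▸ traceTT_nonneg (M * (1 - P))
    linarith
  have key2 : Matrix.trace (Mᵀ * M * P) = ∑ j, lam j * P j j := by
    have e1 : Matrix.trace (Mᵀ * M * P) = Matrix.trace ((Sᵀ * S) * P) := by
      calc Matrix.trace (Mᵀ * M * P)
          = Matrix.trace ((Mᵀ * M * W) * Wᵀ) := by rw [hP, ← Matrix.mul_assoc]
        _ = Matrix.trace (Wᵀ * (Mᵀ * M * W)) := Matrix.trace_mul_comm _ _
        _ = Matrix.trace ((M * W)ᵀ * (M * W)) := by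
            rw [Matrix.transpose_mul]; simp only [Matrix.mul_assoc]
        _ = Matrix.trace ((S * W)ᵀ * (S * W)) := by rw [hMW]
        _ = Matrix.trace (Wᵀ * (Sᵀ * S * W)) := by
            rw [Matrix.transpose_mul]; simp only [Matrix.mul_assoc]
        _ = Matrix.trace ((Sᵀ * S * W) * Wᵀ) := Matrix.trace_mul_comm _ _
        _ = Matrix.trace ((Sᵀ * S) * P) := by rw [hP, ← Matrix.mul_assoc]
    rw [e1]
    have : Matrix.trace ((Sᵀ * S) * P) = ∑ j, ∑ j', (Sᵀ * S) j j' * P j' j := by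
      simp [Matrix.trace, Matrix.diag, Matrix.mul_apply]
    rw [this]
    refine Finset.sum_congr rfl fun j _ => ?_
    rw [Finset.sum_eq_single j ?h1 (by simp)]
    · congr 1
      rw [Matrix.mul_apply, hlam]
      exact Finset.sum_congr rfl fun i _ => by rw [Matrix.transpose_apply, sq]
    · intro j' _ hj'
      have : (Sᵀ * S) j j' = 0 := by
        rw [Matrix.mul_apply]
        refine Finset.sum_eq_zero fun i _ => ?_
        rw [Matrix.transpose_apply]
        by_cases hij : (i : ℕ) = (j : ℕ)
        · rw [hSdiag i j' (by rw [hij]; exact fun h => hj' (Fin.val_injective h.symm)), mul_zero]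
        · rw [hSdiag i j hij, zero_mul]
      rw [this, zero_mul]
  have key3 : (∑ j : Fin n, if r ≤ (j : ℕ) then lam j else 0) ≤ ∑ j, lam j * P j j := by
    by_cases hrn' : r < n
    · set c := lam ⟨r, hrn'⟩ with hc
      have hc0 : 0 ≤ c := hlam_nonneg _
      have term : ∀ j : Fin n,
          c * (P j j - (if r ≤ (j : ℕ) then 1 else 0))
            ≤ lam j * P j j - (if r ≤ (j : ℕ) then lam j else 0) := by
        intro j
        by_cases hj : r ≤ (j : ℕ)
        · simp only [if_pos hj]
          have hlj : lam j ≤ c := lam_anti S hSdiag hSnn hSmono (by exact hj)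
          have hp1 : P j j - 1 ≤ 0 := by linarith [hp_le_one j]
          nlinarith
        · simp only [if_neg hj]
          have hlj : c ≤ lam j := lam_anti S hSdiag hSnn hSmono (by simp; omega)
          nlinarith [hp_nonneg j]
      have hsum := Finset.sum_le_sum fun j (_ : j ∈ Finset.univ) => term j
      have count : ∑ j : Fin n, (if r ≤ (j : ℕ) then (1 : ℝ) else 0) = ((n - r : ℕ) : ℝ) := by
        rw [Finset.sum_boole]
        congr 1
        have : Finset.univ.filter (fun j : Fin n => r ≤ (j : ℕ))
            = Finset.Ici (⟨r, hrn'⟩ : Fin n) := by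
          ext j; simp [Fin.le_def]
        rw [this, Fin.card_Ici]
      have hL : ∑ i : Fin n, c * (P i i - (if r ≤ (i : ℕ) then (1:ℝ) else 0))
          = c * ((k : ℝ) - ((n - r : ℕ) : ℝ)) := by
        rw [← Finset.mul_sum, Finset.sum_sub_distrib, hsum_p, count]
      rw [hL, Finset.sum_sub_distrib] at hsum
      have hkr : ((n - r : ℕ) : ℝ) ≤ (k : ℝ) := Nat.cast_le.mpr hkge
      nlinarith
    · have hzero : (∑ j : Fin n, if r ≤ (j : ℕ) then lam j else 0) = 0 :=
        Finset.sum_eq_zero fun j _ => by rw [if_neg (by omega)]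
      rw [hzero]
      exact Finset.sum_nonneg fun j _ => mul_nonneg (hlam_nonneg j) (hp_nonneg j)
  calc (∑ j : Fin n, if r ≤ (j : ℕ) then lam j else 0)
      ≤ ∑ j, lam j * P j j := key3
    _ = Matrix.trace (Mᵀ * M * P) := key2.symm
    _ ≤ Matrix.trace (Mᵀ * M) := key1

lemma trace_trunc (hSdiag : ∀ (i : Fin m) (j : Fin n), (i : ℕ) ≠ (j : ℕ) → S i j = 0) :
    Matrix.trace ((S - Matrix.of fun (a : Fin m) (b : Fin n) =>
        if (a : ℕ) < r ∧ (b : ℕ) < r then S a b else 0)ᵀ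
      * (S - Matrix.of fun (a : Fin m) (b : Fin n) =>
        if (a : ℕ) < r ∧ (b : ℕ) < r then S a b else 0))
      = ∑ j : Fin n, if r ≤ (j : ℕ) then (∑ i : Fin m, S i j ^ 2) else 0 := by
  rw [traceTT]
  refine Finset.sum_congr rfl fun j _ => ?_
  by_cases hj : r ≤ (j : ℕ)
  · rw [if_pos hj]
    refine Finset.sum_congr rfl fun i _ => ?_
    simp only [Matrix.sub_apply, Matrix.of_apply]
    rw [if_neg (by omega), sub_zero]
  · rw [if_neg hj]
    refine Finset.sum_eq_zero fun i _ => ?_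
    simp only [Matrix.sub_apply, Matrix.of_apply]
    by_cases hi : (i : ℕ) < r
    · rw [if_pos ⟨hi, by omega⟩, sub_self, zero_pow two_ne_zero]
    · rw [if_neg (by omega), sub_zero, hSdiag i j (by omega), zero_pow two_ne_zero]

end Core

end Auxiliary

/-- Weighted Eckart–Young: the rank-`r` truncation of a weighted SVD is a best rank-`r`
approximation in the `B`-norm. -/
theorem weighted_eckart_young (m n r : ℕ) (hr : r ≤ min m n)
    (E : Matrix (Fin m) (Fin m) ℝ) (D : Matrix (Fin n) (Fin n) ℝ)
    (hE : E.PosDef) (hD : D.PosDef)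
    (Z : Matrix (Fin m) (Fin n) ℝ)
    (U : Matrix (Fin m) (Fin m) ℝ) (V : Matrix (Fin n) (Fin n) ℝ)
    (S : Matrix (Fin m) (Fin n) ℝ)
    (hU : Uᵀ * E * U = 1) (hV : Vᵀ * D * V = 1)
    (hSdiag : ∀ (i : Fin m) (j : Fin n), (i : ℕ) ≠ (j : ℕ) → S i j = 0)
    (hSnn : ∀ (i : Fin m) (j : Fin n), (i : ℕ) = (j : ℕ) → 0 ≤ S i j)
    (hSmono : ∀ (i i' : Fin m) (j j' : Fin n), (i : ℕ) = (j : ℕ) → (i' : ℕ) = (j' : ℕ) →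
      (i : ℕ) ≤ (i' : ℕ) → S i' j' ≤ S i j)
    (hZ : Z = U * S * Vᵀ) :
    ∀ Y : Matrix (Fin m) (Fin n) ℝ, Y.rank ≤ r →
      normB E D (Z - (U.submatrix id (Fin.castLE (hr.trans (min_le_left m n))))
          * (S.submatrix (Fin.castLE (hr.trans (min_le_left m n)))
              (Fin.castLE (hr.trans (min_le_right m n))))
          * (V.submatrix id (Fin.castLE (hr.trans (min_le_right m n))))ᵀ)
        ≤ normB E D (Z - Y) := by
  intro Y hY
  have hEt : Eᵀ = E := by
    rw [← Matrix.conjTranspose_eq_transpose_of_trivial]; exact hE.1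
  have hDt : Dᵀ = D := by
    rw [← Matrix.conjTranspose_eq_transpose_of_trivial]; exact hD.1
  have hdU : IsUnit U.det := by
    have h := congrArg Matrix.det hU
    rw [Matrix.det_mul, Matrix.det_mul, Matrix.det_transpose, Matrix.det_one] at h
    exact IsUnit.of_mul_eq_one (E.det * U.det) (by rw [← h]; ring)
  have hdV : IsUnit V.det := by
    have h := congrArg Matrix.det hV
    rw [Matrix.det_mul, Matrix.det_mul, Matrix.det_transpose, Matrix.det_one] at h
    exact IsUnit.of_mul_eq_one (D.det * V.det) (by rw [← h]; ring)
  have hdVT : IsUnit Vᵀ.det := by rw [Matrix.det_transpose]; exact hdV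
  set B := U⁻¹ * Y * (Vᵀ)⁻¹ with hB
  have hYeq : U * B * Vᵀ = Y := by
    rw [hB]
    calc U * (U⁻¹ * Y * (Vᵀ)⁻¹) * Vᵀ
        = (U * U⁻¹) * Y * ((Vᵀ)⁻¹ * Vᵀ) := by simp only [Matrix.mul_assoc]
      _ = Y := by
          rw [Matrix.mul_nonsing_inv _ hdU, Matrix.nonsing_inv_mul _ hdVT,
            Matrix.one_mul, Matrix.mul_one]
  have hrkB : B.rank ≤ r := by
    rw [hB, Matrix.rank_mul_eq_left_of_isUnit_det _ _ (Matrix.isUnit_nonsing_inv_det _ hdVT),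
      Matrix.rank_mul_eq_right_of_isUnit_det _ _ (Matrix.isUnit_nonsing_inv_det _ hdU)]
    exact hY
  have hZY : Z - Y = U * (S - B) * Vᵀ := by
    rw [hZ, ← hYeq, Matrix.mul_sub, Matrix.sub_mul]
  have htr : Z - (U.submatrix id (Fin.castLE (hr.trans (min_le_left m n))))
          * (S.submatrix (Fin.castLE (hr.trans (min_le_left m n)))
              (Fin.castLE (hr.trans (min_le_right m n))))
          * (V.submatrix id (Fin.castLE (hr.trans (min_le_right m n))))ᵀ
      = U * (S - Matrix.of fun (a : Fin m) (b : Fin n) =>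
          if (a : ℕ) < r ∧ (b : ℕ) < r then S a b else 0) * Vᵀ := by
    rw [hZ, trunc_eq (hr.trans (min_le_left m n)) (hr.trans (min_le_right m n)),
      Matrix.mul_sub, Matrix.sub_mul]
  rw [htr, hZY, normB_conj E D hEt hDt U V hU hV, normB_conj E D hEt hDt U V hU hV]
  apply Real.sqrt_le_sqrt
  rw [trace_trunc S hSdiag]
  exact EY_key S (hr.trans (min_le_right m n)) hSdiag hSnn hSmono B hrkB
end

section
/- Let E ∈ ℝ^{m×m}, D ∈ ℝ^{n×n} be symmetric, let Ũ ∈ ℝ^{m×r} with Ũᵀ E Ũ = I_r and Ṽ ∈ ℝ^{n×r} with Ṽᵀ D Ṽ = I_r. Let ξ = Ũ M̃ Ṽᵀ + Ũ_p Ṽᵀ + Ũ Ṽ_pᵀ and ξ' = Ũ M̃' Ṽᵀ + Ũ_p' Ṽᵀ + Ũ Ṽ_p'ᵀ with M̃, M̃' ∈ ℝ^{r×r}, Ũ_p, Ũ_p' ∈ ℝ^{m×r} satisfying Ũᵀ E Ũ_p = Ũᵀ E Ũ_p' = 0, and Ṽ_p, Ṽ_p' ∈ ℝ^{n×r} satisfying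 Ṽᵀ D Ṽ_p = Ṽᵀ D Ṽ_p' = 0. Then ⟨ξ, ξ'⟩_B = ⟨M̃, M̃'⟩ + ⟨E Ũ_p, Ũ_p'⟩ + ⟨D Ṽ_p, Ṽ_p'⟩, where ⟨X,Y⟩_B = trace((E X D)ᵀ Y) and ⟨·,·⟩ is the Frobenius inner product. -/
open Matrix

lemma key_term {m n r : ℕ}
    (E : Matrix (Fin m) (Fin m) ℝ) (D : Matrix (Fin n) (Fin n) ℝ)
    (hE : Eᵀ = E) (hD : Dᵀ = D)
    (X X' : Matrix (Fin m) (Fin r) ℝ) (Y Y' : Matrix (Fin n) (Fin r) ℝ) :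
    Matrix.trace ((E * (X * Yᵀ) * D)ᵀ * (X' * Y'ᵀ))
      = Matrix.trace ((Xᵀ * E * X') * (Y'ᵀ * (D * Y))) := by
  rw [Matrix.transpose_mul, Matrix.transpose_mul, Matrix.transpose_mul,
    Matrix.transpose_transpose, hE, hD]
  have h : D * (Y * Xᵀ * E) * (X' * Y'ᵀ)
      = (D * Y) * ((Xᵀ * E * X') * Y'ᵀ) := by
    simp [Matrix.mul_assoc]
  rw [h, Matrix.trace_mul_comm, Matrix.mul_assoc]

/-- The `B`-inner product of two tangent vectors in the weighted factored representation
decouples into three Frobenius inner products of the factors. -/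
theorem B_inner_product_tangent_vectors (m n r : ℕ)
    (E : Matrix (Fin m) (Fin m) ℝ) (D : Matrix (Fin n) (Fin n) ℝ)
    (hE : Eᵀ = E) (hD : Dᵀ = D)
    (U : Matrix (Fin m) (Fin r) ℝ) (V : Matrix (Fin n) (Fin r) ℝ)
    (hU : Uᵀ * E * U = 1) (hV : Vᵀ * D * V = 1)
    (M M' : Matrix (Fin r) (Fin r) ℝ)
    (Up Up' : Matrix (Fin m) (Fin r) ℝ) (Vp Vp' : Matrix (Fin n) (Fin r) ℝ)
    (hUp : Uᵀ * E * Up = 0) (hUp' : Uᵀ * E * Up' = 0)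
    (hVp : Vᵀ * D * Vp = 0) (hVp' : Vᵀ * D * Vp' = 0) :
    Matrix.trace ((E * (U * M * Vᵀ + Up * Vᵀ + U * Vpᵀ) * D)ᵀ
        * (U * M' * Vᵀ + Up' * Vᵀ + U * Vp'ᵀ))
      = Matrix.trace (Mᵀ * M') + Matrix.trace ((E * Up)ᵀ * Up')
        + Matrix.trace ((D * Vp)ᵀ * Vp') := by
  have hUpT : Upᵀ * (E * U) = 0 := by
    have := congrArg Matrix.transpose hUp
    simpa [Matrix.transpose_mul, hE, Matrix.mul_assoc] using this
  have hUpT' : Up'ᵀ * (E * U) = 0 := by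
    have := congrArg Matrix.transpose hUp'
    simpa [Matrix.transpose_mul, hE, Matrix.mul_assoc] using this
  have hVpT : Vpᵀ * (D * V) = 0 := by
    have := congrArg Matrix.transpose hVp
    simpa [Matrix.transpose_mul, hD, Matrix.mul_assoc] using this
  have hVpT' : Vp'ᵀ * (D * V) = 0 := by
    have := congrArg Matrix.transpose hVp'
    simpa [Matrix.transpose_mul, hD, Matrix.mul_assoc] using this
  have hU' : Uᵀ * (E * U) = 1 := by rw [← Matrix.mul_assoc]; exact hU
  have hV' : Vᵀ * (D * V) = 1 := by rw [← Matrix.mul_assoc]; exact hV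
  have hUp2 : Uᵀ * (E * Up) = 0 := by rw [← Matrix.mul_assoc]; exact hUp
  have hUp2' : Uᵀ * (E * Up') = 0 := by rw [← Matrix.mul_assoc]; exact hUp'
  have hVp2 : Vᵀ * (D * Vp) = 0 := by rw [← Matrix.mul_assoc]; exact hVp
  have hVp2' : Vᵀ * (D * Vp') = 0 := by rw [← Matrix.mul_assoc]; exact hVp'
  have hM : U * M * Vᵀ = (U * M) * Vᵀ := rfl
  simp only [Matrix.mul_add, Matrix.add_mul, Matrix.transpose_add,
    Matrix.trace_add]
  rw [key_term E D hE hD (U*M) (U*M') V V, key_term E D hE hD (U*M) Up' V V,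
    key_term E D hE hD (U*M) U V Vp', key_term E D hE hD Up (U*M') V V,
    key_term E D hE hD Up Up' V V, key_term E D hE hD Up U V Vp',
    key_term E D hE hD U (U*M') Vp V, key_term E D hE hD U Up' Vp V,
    key_term E D hE hD U U Vp Vp']
  simp only [Matrix.transpose_mul, Matrix.mul_assoc, hU', hV', hUp2, hUp2',
    hVp2, hVp2', hUpT, hUpT', hVpT, hVpT', Matrix.mul_zero, Matrix.zero_mul,
    Matrix.mul_one, Matrix.one_mul, Matrix.trace_zero, add_zero, zero_add, hE, hD]
  have h33 : Matrix.trace (Vp'ᵀ * (D * Vp)) = Matrix.trace (Vpᵀ * (D * Vp')) := by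
    rw [← Matrix.trace_transpose (Vp'ᵀ * (D * Vp))]
    simp [Matrix.transpose_mul, hD, Matrix.mul_assoc]
  rw [h33]
  have hA : Uᵀ * (E * (U * M')) = M' := by
    rw [← Matrix.mul_assoc, ← Matrix.mul_assoc, hU, Matrix.one_mul]
  have hB : Upᵀ * (E * (U * M')) = 0 := by
    rw [← Matrix.mul_assoc E U M', ← Matrix.mul_assoc, hUpT, Matrix.zero_mul]
  rw [hA, hB, Matrix.trace_zero, add_zero]
end

section
/- Let E ∈ ℝ^{m×m}, D ∈ ℝ^{n×n} be symmetric positive definite, and let Ũ ∈ ℝ^{m×r}, Ṽ ∈ ℝ^{n×r} satisfy Ũᵀ E Ũ = I_r and Ṽᵀ D Ṽ = I_r. For arbitrary Z ∈ ℝ^{m×n}, define ξ = Z − (I_m − Ũ Ũᵀ E) Z (I_n − D Ṽ Ṽᵀ), M̃ = Ũᵀ E Z D Ṽ, Ũ_p = Z D Ṽ − Ũ M̃, and Ṽ_p = Zᵀ E Ũ − Ṽ M̃ᵀ. Then (i) ξ = Ũ M̃ Ṽᵀ + Ũ_p Ṽᵀ + Ũ Ṽ_pᵀ with Ũᵀ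 E Ũ_p = 0 and Ṽᵀ D Ṽ_p = 0, and (ii) for every M' ∈ ℝ^{r×r}, every U_p' ∈ ℝ^{m×r} with Ũᵀ E U_p' = 0, and every V_p' ∈ ℝ^{n×r} with Ṽᵀ D V_p' = 0, one has ⟨Z − ξ, Ũ M' Ṽᵀ + U_p' Ṽᵀ + Ũ V_p'ᵀ⟩_B = 0, where ⟨X,Y⟩_B = trace((E X D)ᵀ Y). Hence ξ is the B-orthogonal projection of Z onto the subspace { Ũ M Ṽᵀ + U_p Ṽᵀ + Ũ V_pᵀ : Ũᵀ E U_p = 0, Ṽᵀ D V_p = 0 }. -/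
open Matrix

/-- The explicit formula for the `B`-orthogonal projection onto the tangent space:
(i) `ξ` lies in the tangent space with the given factored representation, and
(ii) `Z − ξ` is `B`-orthogonal to every element of the tangent space. -/
theorem weighted_tangent_space_projection (m n r : ℕ)
    (E : Matrix (Fin m) (Fin m) ℝ) (D : Matrix (Fin n) (Fin n) ℝ)
    (hE : E.PosDef) (hD : D.PosDef)
    (U : Matrix (Fin m) (Fin r) ℝ) (V : Matrix (Fin n) (Fin r) ℝ)
    (hU : Uᵀ * E * U = 1) (hV : Vᵀ * D * V = 1)
    (Z : Matrix (Fin m) (Fin n) ℝ)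
    (ξ : Matrix (Fin m) (Fin n) ℝ)
    (hξ : ξ = Z - (1 - U * Uᵀ * E) * Z * (1 - D * V * Vᵀ))
    (M : Matrix (Fin r) (Fin r) ℝ) (hM : M = Uᵀ * E * Z * D * V)
    (Up : Matrix (Fin m) (Fin r) ℝ) (hUp : Up = Z * D * V - U * M)
    (Vp : Matrix (Fin n) (Fin r) ℝ) (hVp : Vp = Zᵀ * E * U - V * Mᵀ) :
    (ξ = U * M * Vᵀ + Up * Vᵀ + U * Vpᵀ ∧ Uᵀ * E * Up = 0 ∧ Vᵀ * D * Vp = 0) ∧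
    (∀ (M' : Matrix (Fin r) (Fin r) ℝ) (Up' : Matrix (Fin m) (Fin r) ℝ)
        (Vp' : Matrix (Fin n) (Fin r) ℝ),
        Uᵀ * E * Up' = 0 → Vᵀ * D * Vp' = 0 →
        Matrix.trace ((E * (Z - ξ) * D)ᵀ * (U * M' * Vᵀ + Up' * Vᵀ + U * Vp'ᵀ)) = 0) := by
  have hEs : Eᵀ = E := by
    have h := hE.isHermitian
    rwa [Matrix.IsHermitian, Matrix.conjTranspose_eq_transpose_of_trivial] at h
  have hDs : Dᵀ = D := by
    have h := hD.isHermitian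
    rwa [Matrix.IsHermitian, Matrix.conjTranspose_eq_transpose_of_trivial] at h
  -- helper simp lemmas from hU, hV
  have hU1 : ∀ {k : Type} [Fintype k] (X : Matrix (Fin r) k ℝ), Uᵀ * (E * (U * X)) = X := by
    intro k _ X
    calc Uᵀ * (E * (U * X)) = (Uᵀ * E * U) * X := by rw [Matrix.mul_assoc, Matrix.mul_assoc]
    _ = X := by rw [hU, Matrix.one_mul]
  have hV1 : ∀ {k : Type} [Fintype k] (X : Matrix (Fin r) k ℝ), Vᵀ * (D * (V * X)) = X := by
    intro k _ X
    calc Vᵀ * (D * (V * X)) = (Vᵀ * D * V) * X := by rw [Matrix.mul_assoc, Matrix.mul_assoc]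
    _ = X := by rw [hV, Matrix.one_mul]
  set W : Matrix (Fin m) (Fin n) ℝ := (1 - U * Uᵀ * E) * Z * (1 - D * V * Vᵀ) with hW
  have hA : Uᵀ * E * W = 0 := by
    have : Uᵀ * E * (1 - U * Uᵀ * E) = 0 := by
      rw [Matrix.mul_sub, Matrix.mul_one]
      rw [show Uᵀ * E * (U * Uᵀ * E) = (Uᵀ * E * U) * (Uᵀ * E) by
        simp only [Matrix.mul_assoc]]
      rw [hU, Matrix.one_mul, sub_self]
    rw [hW, show Uᵀ * E * ((1 - U * Uᵀ * E) * Z * (1 - D * V * Vᵀ))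
        = (Uᵀ * E * (1 - U * Uᵀ * E)) * (Z * (1 - D * V * Vᵀ)) by
      simp only [Matrix.mul_assoc], this, Matrix.zero_mul]
  have hB : W * (D * V) = 0 := by
    have : (1 - D * V * Vᵀ) * (D * V) = 0 := by
      rw [Matrix.sub_mul, Matrix.one_mul]
      rw [show D * V * Vᵀ * (D * V) = D * V * (Vᵀ * D * V) by simp only [Matrix.mul_assoc]]
      rw [hV, Matrix.mul_one, sub_self]
    rw [hW, Matrix.mul_assoc, this, Matrix.mul_zero]
  have hWEU : Wᵀ * (E * U) = 0 := by
    have := congrArg Matrix.transpose hA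
    simpa [Matrix.transpose_mul, Matrix.mul_assoc, hEs] using this
  have hVDW : Vᵀ * (D * Wᵀ) = 0 := by
    have := congrArg Matrix.transpose hB
    simpa [Matrix.transpose_mul, Matrix.mul_assoc, hDs] using this
  constructor
  · refine ⟨?_, ?_, ?_⟩
    · subst hξ hM hUp hVp
      simp only [Matrix.mul_sub, Matrix.sub_mul, Matrix.mul_one, Matrix.one_mul,
        Matrix.transpose_sub, Matrix.transpose_mul, Matrix.transpose_transpose,
        Matrix.mul_assoc, hU1, hV1, hEs, hDs, hW]
      abel
    · subst hUp hM
      simp only [Matrix.mul_sub, Matrix.mul_assoc, hU1, hEs, hDs, sub_self]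
    · subst hVp hM
      simp only [Matrix.mul_sub, Matrix.transpose_mul, Matrix.transpose_transpose,
        Matrix.mul_assoc, hV1, hEs, hDs, sub_self]
  · intro M' Up' Vp' hUp' hVp'
    have hZξ : Z - ξ = W := by rw [hξ]; abel
    rw [hZξ]
    have hEW : (E * W * D)ᵀ = D * (Wᵀ * E) := by
      simp [Matrix.transpose_mul, hEs, hDs, Matrix.mul_assoc]
    rw [hEW]
    simp only [Matrix.mul_add, Matrix.trace_add]
    have t1 : D * (Wᵀ * E) * (U * M' * Vᵀ) = 0 := by
      rw [show D * (Wᵀ * E) * (U * M' * Vᵀ) = D * ((Wᵀ * (E * U)) * (M' * Vᵀ)) by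
        simp only [Matrix.mul_assoc], hWEU, Matrix.zero_mul, Matrix.mul_zero]
    have t3 : D * (Wᵀ * E) * (U * Vp'ᵀ) = 0 := by
      rw [show D * (Wᵀ * E) * (U * Vp'ᵀ) = D * ((Wᵀ * (E * U)) * Vp'ᵀ) by
        simp only [Matrix.mul_assoc], hWEU, Matrix.zero_mul, Matrix.mul_zero]
    rw [t1, t3, Matrix.trace_zero]
    have t2 : Matrix.trace (D * (Wᵀ * E) * (Up' * Vᵀ)) = 0 := by
      rw [show D * (Wᵀ * E) * (Up' * Vᵀ) = (D * (Wᵀ * (E * Up'))) * Vᵀ by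
        simp only [Matrix.mul_assoc]]
      rw [Matrix.trace_mul_comm]
      rw [show Vᵀ * (D * (Wᵀ * (E * Up'))) = (Vᵀ * (D * Wᵀ)) * (E * Up') by
        simp only [Matrix.mul_assoc], hVDW, Matrix.zero_mul, Matrix.trace_zero]
    rw [t2]; ring
end

section
/- Let E ∈ ℝ^{m×m}, D ∈ ℝ^{n×n} be symmetric positive definite, and let U ∈ ℝ^{m×r}, V ∈ ℝ^{n×r} satisfy UᵀU = I_r and VᵀV = I_r. Let M_η ∈ ℝ^{r×r}, U_η ∈ ℝ^{m×r} with UᵀU_η = 0, and V_η ∈ ℝ^{n×r} with VᵀV_η = 0, and set η = U M_η Vᵀ + U_η Vᵀ + U V_ηᵀ. Define U_ξ = (I_m − UUᵀ) E⁻¹ (U_η + U M_η)(Vᵀ D V)⁻¹, V_ξ = (I_n − VVᵀ) D⁻¹ (V_η + V M_ηᵀ)(Uᵀ E U)⁻¹, and M_ξ = (Uᵀ E U)⁻¹ [ M_η − (Uᵀ E) U_ξ (Vᵀ D V) − (Uᵀ E U) V_ξᵀ D V ] (Vᵀ D V)⁻¹, and set ξ = U M_ξ Vᵀ + U_ξ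 Vᵀ + U V_ξᵀ. Then UᵀU_ξ = 0, VᵀV_ξ = 0, and ξ satisfies Proj_X(E ξ D) = η, where Proj_X(Z) = Z − (I_m − UUᵀ) Z (I_n − VVᵀ). (The matrices Uᵀ E U and Vᵀ D V are invertible since E, D are SPD and U, V have full column rank.) -/
set_option maxHeartbeats 2000000

open Matrix

private lemma posdef_conj {n r : ℕ} {D : Matrix (Fin n) (Fin n) ℝ} (hD : D.PosDef)
    (V : Matrix (Fin n) (Fin r) ℝ) (hV : Vᵀ * V = 1) : (Vᵀ * D * V).PosDef := by
  have hDt : Dᵀ = D := by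
    rw [← conjTranspose_eq_transpose_of_trivial]; exact hD.isHermitian
  refine posDef_iff_dotProduct_mulVec.mpr ⟨?_, ?_⟩
  · show (Vᵀ * D * V)ᴴ = _
    rw [conjTranspose_eq_transpose_of_trivial, Matrix.transpose_mul, Matrix.transpose_mul,
      Matrix.transpose_transpose, hDt, Matrix.mul_assoc]
  · intro x hx
    have hVx : V *ᵥ x ≠ 0 := by
      intro h
      apply hx
      have h2 : (Vᵀ * V) *ᵥ x = 0 := by rw [← Matrix.mulVec_mulVec, h, Matrix.mulVec_zero]
      rwa [hV, Matrix.one_mulVec] at h2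
    have h3 := hD.dotProduct_mulVec_pos hVx
    rw [star_trivial] at h3 ⊢
    calc x ⬝ᵥ (Vᵀ * D * V) *ᵥ x
        = (V *ᵥ x) ⬝ᵥ D *ᵥ (V *ᵥ x) := by
          rw [Matrix.mul_assoc, ← Matrix.mulVec_mulVec, Matrix.dotProduct_mulVec,
            Matrix.vecMul_transpose, ← Matrix.mulVec_mulVec]
      _ > 0 := h3

private lemma precond_aux {m n r : ℕ}
    (E : Matrix (Fin m) (Fin m) ℝ) (D : Matrix (Fin n) (Fin n) ℝ)
    (U : Matrix (Fin m) (Fin r) ℝ) (V : Matrix (Fin n) (Fin r) ℝ)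
    (Mη : Matrix (Fin r) (Fin r) ℝ)
    (Uη : Matrix (Fin m) (Fin r) ℝ)
    (Uξ : Matrix (Fin m) (Fin r) ℝ) (Vξ : Matrix (Fin n) (Fin r) ℝ)
    (Mξ : Matrix (Fin r) (Fin r) ℝ)
    (hU : Uᵀ * U = 1) (hUη : Uᵀ * Uη = 0)
    (hE1 : E * E⁻¹ = 1)
    (hS : (Vᵀ * D * V)⁻¹ * (Vᵀ * D * V) = 1)
    (hT : (Uᵀ * E * U)⁻¹ * (Uᵀ * E * U) = 1)
    (hUξ : Uξ = (1 - U * Uᵀ) * E⁻¹ * (Uη + U * Mη) * (Vᵀ * D * V)⁻¹)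
    (hMξ : Mξ = (Uᵀ * E * U)⁻¹
        * (Mη - (Uᵀ * E) * Uξ * (Vᵀ * D * V) - (Uᵀ * E * U) * Vξᵀ * (D * V))
        * (Vᵀ * D * V)⁻¹) :
    E * (U * Mξ * Vᵀ + Uξ * Vᵀ + U * Vξᵀ) * (D * V) = Uη + U * Mη := by
  have f_E : ∀ {c : ℕ} (X : Matrix (Fin m) (Fin c) ℝ), E * (E⁻¹ * X) = X := fun X => by
    rw [← Matrix.mul_assoc, hE1, Matrix.one_mul]
  have f_U : ∀ {c : ℕ} (X : Matrix (Fin r) (Fin c) ℝ), Uᵀ * (U * X) = X := fun X => by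
    rw [← Matrix.mul_assoc, hU, Matrix.one_mul]
  have f_Uη : ∀ {c : ℕ} (X : Matrix (Fin r) (Fin c) ℝ), Uᵀ * (Uη * X) = 0 := fun X => by
    rw [← Matrix.mul_assoc, hUη, Matrix.zero_mul]
  have f_T : ∀ {c : ℕ} (X : Matrix (Fin r) (Fin c) ℝ),
      (Uᵀ * (E * U))⁻¹ * (Uᵀ * (E * (U * X))) = X := fun X => by
    have h : (Uᵀ * (E * U))⁻¹ * (Uᵀ * (E * (U * X)))
        = ((Uᵀ * E * U)⁻¹ * (Uᵀ * E * U)) * X := by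
      simp only [Matrix.mul_assoc]
    rw [h, hT, Matrix.one_mul]
  have g_S : (Vᵀ * (D * V))⁻¹ * (Vᵀ * (D * V)) = 1 := by
    simpa only [Matrix.mul_assoc] using hS
  have g_T : (Uᵀ * (E * U))⁻¹ * (Uᵀ * (E * U)) = 1 := by
    simpa only [Matrix.mul_assoc] using hT
  subst hMξ hUξ
  simp only [Matrix.mul_assoc, Matrix.mul_add, Matrix.add_mul, Matrix.mul_sub, Matrix.sub_mul,
    Matrix.mul_one, Matrix.one_mul, g_S, g_T, f_E, f_U, f_Uη, f_T, hU, hUη,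
    Matrix.zero_mul, Matrix.mul_zero, add_zero, zero_add, sub_zero, zero_sub,
    Matrix.neg_mul, Matrix.mul_neg, neg_neg]
  abel

/-- Explicit solution of the projected equation `Proj_X(E ξ D) = η` on the tangent space,
where `Proj_X(Z) = Z − (I − UUᵀ) Z (I − VVᵀ)`. -/
theorem precond_EXD_solution (m n r : ℕ)
    (E : Matrix (Fin m) (Fin m) ℝ) (D : Matrix (Fin n) (Fin n) ℝ)
    (hE : E.PosDef) (hD : D.PosDef)
    (U : Matrix (Fin m) (Fin r) ℝ) (V : Matrix (Fin n) (Fin r) ℝ)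
    (hU : Uᵀ * U = 1) (hV : Vᵀ * V = 1)
    (Mη : Matrix (Fin r) (Fin r) ℝ)
    (Uη : Matrix (Fin m) (Fin r) ℝ) (hUη : Uᵀ * Uη = 0)
    (Vη : Matrix (Fin n) (Fin r) ℝ) (hVη : Vᵀ * Vη = 0)
    (η : Matrix (Fin m) (Fin n) ℝ) (hη : η = U * Mη * Vᵀ + Uη * Vᵀ + U * Vηᵀ)
    (Uξ : Matrix (Fin m) (Fin r) ℝ)
    (hUξ : Uξ = (1 - U * Uᵀ) * E⁻¹ * (Uη + U * Mη) * (Vᵀ * D * V)⁻¹)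
    (Vξ : Matrix (Fin n) (Fin r) ℝ)
    (hVξ : Vξ = (1 - V * Vᵀ) * D⁻¹ * (Vη + V * Mηᵀ) * (Uᵀ * E * U)⁻¹)
    (Mξ : Matrix (Fin r) (Fin r) ℝ)
    (hMξ : Mξ = (Uᵀ * E * U)⁻¹
        * (Mη - (Uᵀ * E) * Uξ * (Vᵀ * D * V) - (Uᵀ * E * U) * Vξᵀ * (D * V))
        * (Vᵀ * D * V)⁻¹)
    (ξ : Matrix (Fin m) (Fin n) ℝ)
    (hξ : ξ = U * Mξ * Vᵀ + Uξ * Vᵀ + U * Vξᵀ) :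
    Uᵀ * Uξ = 0 ∧ Vᵀ * Vξ = 0 ∧
    E * ξ * D - (1 - U * Uᵀ) * (E * ξ * D) * (1 - V * Vᵀ) = η := by
  have hEt : Eᵀ = E := by
    rw [← conjTranspose_eq_transpose_of_trivial]; exact hE.isHermitian
  have hDt : Dᵀ = D := by
    rw [← conjTranspose_eq_transpose_of_trivial]; exact hD.isHermitian
  -- invertibility facts
  have hSpd := posdef_conj hD V hV
  have hTpd := posdef_conj hE U hU
  have hE1 : E * E⁻¹ = 1 := Matrix.mul_nonsing_inv E ((Matrix.isUnit_iff_isUnit_det E).mp hE.isUnit)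
  have hD1 : D * D⁻¹ = 1 := Matrix.mul_nonsing_inv D ((Matrix.isUnit_iff_isUnit_det D).mp hD.isUnit)
  have hS1 : (Vᵀ * D * V)⁻¹ * (Vᵀ * D * V) = 1 :=
    Matrix.nonsing_inv_mul _ ((Matrix.isUnit_iff_isUnit_det _).mp hSpd.isUnit)
  have hS2 : (Vᵀ * D * V) * (Vᵀ * D * V)⁻¹ = 1 :=
    Matrix.mul_nonsing_inv _ ((Matrix.isUnit_iff_isUnit_det _).mp hSpd.isUnit)
  have hT1 : (Uᵀ * E * U)⁻¹ * (Uᵀ * E * U) = 1 :=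
    Matrix.nonsing_inv_mul _ ((Matrix.isUnit_iff_isUnit_det _).mp hTpd.isUnit)
  -- first conjunct
  have hUUξ : Uᵀ * Uξ = 0 := by
    have h0 : Uᵀ * (1 - U * Uᵀ) = 0 := by
      rw [Matrix.mul_sub, Matrix.mul_one, ← Matrix.mul_assoc, hU, Matrix.one_mul, sub_self]
    rw [hUξ, ← Matrix.mul_assoc, ← Matrix.mul_assoc, ← Matrix.mul_assoc, h0,
      Matrix.zero_mul, Matrix.zero_mul, Matrix.zero_mul]
  have hVVξ : Vᵀ * Vξ = 0 := by
    have h0 : Vᵀ * (1 - V * Vᵀ) = 0 := by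
      rw [Matrix.mul_sub, Matrix.mul_one, ← Matrix.mul_assoc, hV, Matrix.one_mul, sub_self]
    rw [hVξ, ← Matrix.mul_assoc, ← Matrix.mul_assoc, ← Matrix.mul_assoc, h0,
      Matrix.zero_mul, Matrix.zero_mul, Matrix.zero_mul]
  refine ⟨hUUξ, hVVξ, ?_⟩
  -- key identity 1 : (E ξ D) V = Uη + U Mη
  have key1 : E * (U * Mξ * Vᵀ + Uξ * Vᵀ + U * Vξᵀ) * (D * V) = Uη + U * Mη :=
    precond_aux E D U V Mη Uη Uξ Vξ Mξ hU hUη hE1 hS1 hT1 hUξ hMξ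
  -- transposed Mξ relation
  have hMξt : Mξᵀ = (Vᵀ * D * V)⁻¹
      * (Mηᵀ - (Vᵀ * D) * Vξ * (Uᵀ * E * U) - (Vᵀ * D * V) * Uξᵀ * (E * U))
      * (Uᵀ * E * U)⁻¹ := by
    rw [hMξ]
    simp only [Matrix.transpose_mul, Matrix.transpose_sub, Matrix.transpose_nonsing_inv,
      Matrix.transpose_transpose, hEt, hDt]
    rw [sub_right_comm]
    simp only [Matrix.mul_assoc]
  -- key identity 2 : D ξᵀ (E U) = Vη + V Mηᵀ
  have key2 : D * (V * Mξᵀ * Uᵀ + Vξ * Uᵀ + V * Uξᵀ) * (E * U) = Vη + V * Mηᵀ :=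
    precond_aux D E V U Mηᵀ Vη Vξ Uξ Mξᵀ hV hVη hD1 hT1 hS1 hVξ hMξt
  -- convert key2 into a statement about Uᵀ (E ξ D)
  have hξt : ξᵀ = V * Mξᵀ * Uᵀ + Vξ * Uᵀ + V * Uξᵀ := by
    rw [hξ]
    simp only [Matrix.transpose_add, Matrix.transpose_mul, Matrix.transpose_transpose,
      Matrix.mul_assoc]
    abel
  have key2' : Uᵀ * (E * ξ * D) = Vηᵀ + Mη * Vᵀ := by
    have h := congrArg Matrix.transpose key2
    rw [← hξt] at h
    simp only [Matrix.transpose_mul, Matrix.transpose_add, Matrix.transpose_transpose,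
      hEt, hDt] at h
    simpa only [Matrix.mul_assoc] using h
  -- final assembly
  have k1 : ∀ {c : ℕ} (X : Matrix (Fin r) (Fin c) ℝ),
      E * (ξ * (D * (V * X))) = Uη * X + U * (Mη * X) := fun X => by
    have h : E * (ξ * (D * (V * X))) = (E * (U * Mξ * Vᵀ + Uξ * Vᵀ + U * Vξᵀ) * (D * V)) * X := by
      rw [hξ]; simp only [Matrix.mul_assoc]
    rw [h, key1, Matrix.add_mul, Matrix.mul_assoc]
  have k2 : Uᵀ * (E * (ξ * D)) = Vηᵀ + Mη * Vᵀ := by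
    rw [← Matrix.mul_assoc E ξ D]; exact key2'
  have f_V : ∀ {c : ℕ} (X : Matrix (Fin r) (Fin c) ℝ), Vᵀ * (V * X) = X := fun X => by
    rw [← Matrix.mul_assoc, hV, Matrix.one_mul]
  have f_Vη : ∀ {c : ℕ} (X : Matrix (Fin r) (Fin c) ℝ), Vηᵀ * (V * X) = 0 := fun X => by
    have h : Vηᵀ * V = 0 := by
      have := congrArg Matrix.transpose hVη
      simpa [Matrix.transpose_mul] using this
    rw [← Matrix.mul_assoc, h, Matrix.zero_mul]
  rw [hη]
  simp only [Matrix.mul_assoc, Matrix.mul_sub, Matrix.sub_mul, Matrix.mul_add, Matrix.add_mul,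
    Matrix.mul_one, Matrix.one_mul, k1, k2, f_V, f_Vη, hV, Matrix.zero_mul, Matrix.mul_zero,
    add_zero, zero_add, sub_zero, Matrix.neg_mul, Matrix.mul_neg, neg_neg]
  abel
end

section
/- Let E ∈ ℝ^{m×m} and D ∈ ℝ^{n×n} be symmetric positive definite and let X ∈ ℝ^{m×n} have rank r. Then X admits a thin weighted SVD: there exist Ũ ∈ ℝ^{m×r} with Ũᵀ E Ũ = I_r, Ṽ ∈ ℝ^{n×r} with Ṽᵀ D Ṽ = I_r, and a diagonal matrix Σ̃ ∈ ℝ^{r×r} with strictly positive diagonal entries, such that X = Ũ Σ̃ Ṽᵀ. -/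
open Matrix

/-- Thin (unweighted) SVD existence for real matrices. -/
theorem thin_svd_exists_aux (m n r : ℕ) (Y : Matrix (Fin m) (Fin n) ℝ) (hY : Y.rank = r) :
    ∃ (P : Matrix (Fin m) (Fin r) ℝ) (Q : Matrix (Fin n) (Fin r) ℝ) (σ : Fin r → ℝ),
      Pᵀ * P = 1 ∧ Qᵀ * Q = 1 ∧ (∀ i, 0 < σ i) ∧ Y = P * diagonal σ * Qᵀ := by
  classical
  set G : Matrix (Fin n) (Fin n) ℝ := Yᵀ * Y with hGdef
  have hGherm : G.IsHermitian := by
    have := Matrix.isHermitian_conjTranspose_mul_self Y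
    simpa [hGdef] using this
  have hGpsd : G.PosSemidef := by
    have := Matrix.posSemidef_conjTranspose_mul_self Y
    simpa [hGdef, conjTranspose_eq_transpose_of_trivial] using this
  set μ : Fin n → ℝ := hGherm.eigenvalues with hμdef
  have hμnonneg : ∀ k, 0 ≤ μ k := fun k => hGpsd.eigenvalues_nonneg k
  have hcard : Fintype.card {k // μ k ≠ 0} = r := by
    rw [← hGherm.rank_eq_card_non_zero_eigs, hGdef, Matrix.rank_transpose_mul_self, hY]
  set e : Fin r ≃ {k // μ k ≠ 0} := (Fintype.equivFinOfCardEq hcard).symm with hedef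
  set f : Fin r → Fin n := fun i => (e i : Fin n) with hfdef
  have hfinj : Function.Injective f := fun i j h => e.injective (Subtype.ext h)
  have hfne : ∀ i, μ (f i) ≠ 0 := fun i => (e i).2
  set W : Matrix (Fin n) (Fin n) ℝ := (hGherm.eigenvectorUnitary : Matrix (Fin n) (Fin n) ℝ)
    with hWdef
  have hWstar : star W * W = 1 ∧ W * star W = 1 := by
    constructor
    · exact Matrix.mem_unitaryGroup_iff'.mp hGherm.eigenvectorUnitary.2
    · exact Matrix.mem_unitaryGroup_iff.mp hGherm.eigenvectorUnitary.2
  have hstarW : star W = Wᵀ := by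
    rw [Matrix.star_eq_conjTranspose, conjTranspose_eq_transpose_of_trivial]
  have hWtW : Wᵀ * W = 1 := by rw [← hstarW]; exact hWstar.1
  have hWWt : W * Wᵀ = 1 := by rw [← hstarW]; exact hWstar.2
  have hspec : G = W * diagonal μ * Wᵀ := by
    have := hGherm.spectral_theorem
    rw [← hstarW]
    simpa [hWdef, hμdef, Function.comp] using this
  -- σ
  set σ : Fin r → ℝ := fun i => Real.sqrt (μ (f i)) with hσdef
  have hμpos : ∀ i, 0 < μ (f i) := fun i => lt_of_le_of_ne (hμnonneg _) (Ne.symm (hfne i))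
  have hσpos : ∀ i, 0 < σ i := fun i => Real.sqrt_pos.mpr (hμpos i)
  have hσsq : ∀ i, σ i * σ i = μ (f i) := fun i => Real.mul_self_sqrt (hμpos i).le
  -- Q
  set Q : Matrix (Fin n) (Fin r) ℝ := W.submatrix id f with hQdef
  have hQtQ : Qᵀ * Q = 1 := by
    ext i j
    have h1 : (Wᵀ * W) (f i) (f j) = (1 : Matrix (Fin n) (Fin n) ℝ) (f i) (f j) := by rw [hWtW]
    simp only [Matrix.mul_apply, Matrix.transpose_apply, hQdef, Matrix.submatrix_apply,
      id_eq] at h1 ⊢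
    rw [h1, Matrix.one_apply, Matrix.one_apply]
    simp [hfinj.eq_iff]
  -- Qᵀ G Q = diagonal (μ ∘ f)
  have hQGQ : Qᵀ * G * Q = diagonal (fun i => μ (f i)) := by
    have hWtGW : Wᵀ * G * W = diagonal μ := by
      rw [hspec]
      rw [show Wᵀ * (W * diagonal μ * Wᵀ) * W = (Wᵀ * W) * diagonal μ * (Wᵀ * W) by
        simp only [Matrix.mul_assoc]]
      rw [hWtW, one_mul, mul_one]
    ext i j
    have h1 : (Wᵀ * G * W) (f i) (f j) = diagonal μ (f i) (f j) := by rw [hWtGW]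
    have h2 : (Qᵀ * G * Q) i j = (Wᵀ * G * W) (f i) (f j) := by
      simp only [Matrix.mul_apply, Matrix.transpose_apply, hQdef, Matrix.submatrix_apply, id_eq]
    rw [h2, h1]
    by_cases hij : i = j
    · subst hij; simp [Matrix.diagonal_apply_eq]
    · rw [Matrix.diagonal_apply_ne _ (fun h => hij (hfinj h)),
        Matrix.diagonal_apply_ne _ hij]
  -- P
  set P : Matrix (Fin m) (Fin r) ℝ := Y * Q * diagonal (fun i => (σ i)⁻¹) with hPdef
  have hPtP : Pᵀ * P = 1 := by
    rw [hPdef]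
    rw [Matrix.transpose_mul, Matrix.transpose_mul, Matrix.diagonal_transpose]
    rw [show diagonal (fun i => (σ i)⁻¹) * (Qᵀ * Yᵀ) * (Y * Q * diagonal fun i => (σ i)⁻¹)
      = diagonal (fun i => (σ i)⁻¹) * (Qᵀ * (Yᵀ * Y) * Q) * diagonal (fun i => (σ i)⁻¹) by
        simp only [Matrix.mul_assoc]]
    rw [← hGdef, hQGQ, Matrix.diagonal_mul_diagonal, Matrix.diagonal_mul_diagonal]
    ext i j
    rcases eq_or_ne i j with rfl | hij
    · rw [Matrix.diagonal_apply_eq, Matrix.one_apply_eq, ← hσsq i]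
      have h := (hσpos i).ne'
      field_simp
    · rw [Matrix.diagonal_apply_ne _ hij, Matrix.one_apply_ne hij]
  -- Y * Q * Qᵀ = Y
  have hYQQ : Y * Q * Qᵀ = Y := by
    set Z : Matrix (Fin m) (Fin n) ℝ := Y * W with hZdef
    have hZcol : ∀ k, μ k = 0 → ∀ i, Z i k = 0 := by
      intro k hk i
      have hZtZ : Zᵀ * Z = diagonal μ := by
        rw [hZdef, Matrix.transpose_mul]
        rw [show Wᵀ * Yᵀ * (Y * W) = Wᵀ * (Yᵀ * Y) * W by simp only [Matrix.mul_assoc], ← hGdef, hspec]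
        rw [show Wᵀ * (W * diagonal μ * Wᵀ) * W = (Wᵀ * W) * diagonal μ * (Wᵀ * W) by
          simp only [Matrix.mul_assoc], hWtW, one_mul, mul_one]
      have hdiag : (Zᵀ * Z) k k = 0 := by rw [hZtZ]; simp [hk]
      have hsum : ∑ i, Z i k * Z i k = 0 := by
        simpa [Matrix.mul_apply, Matrix.transpose_apply] using hdiag
      have := (Finset.sum_eq_zero_iff_of_nonneg (fun i _ => mul_self_nonneg (Z i k))).mp hsum
        i (Finset.mem_univ i)
      exact mul_self_eq_zero.mp this
    have hYW : Y = Z * Wᵀ := by rw [hZdef, Matrix.mul_assoc, hWWt, Matrix.mul_one]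
    have hYQ : Y * Q = Z.submatrix id f := by
      ext i j
      simp [hQdef, hZdef, Matrix.mul_apply, Matrix.submatrix_apply]
    rw [hYQ]
    conv_rhs => rw [hYW]
    ext i j
    simp only [Matrix.mul_apply, Matrix.submatrix_apply, Matrix.transpose_apply, id_eq,
      hQdef]
    -- ∑ l : Fin r, Z i (f l) * W j (f l) = ∑ k : Fin n, Z i k * W j k
    rw [← Finset.sum_filter_of_ne (s := Finset.univ)
      (p := fun k => μ k ≠ 0) (f := fun k => Z i k * W j k)
      (by intro k _ hne hk; exact hne (by show Z i k * W j k = 0; rw [hZcol k hk i, zero_mul]))]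
    rw [Finset.sum_subtype (p := fun k => μ k ≠ 0) (Finset.univ.filter fun k => μ k ≠ 0)
      (by intro x; simp) (fun k => Z i k * W j k)]
    rw [← Equiv.sum_comp e (fun s : {k // μ k ≠ 0} => Z i (s : Fin n) * W j (s : Fin n))]
  refine ⟨P, Q, σ, hPtP, hQtQ, hσpos, ?_⟩
  rw [hPdef, Matrix.mul_assoc (Y * Q), Matrix.diagonal_mul_diagonal]
  rw [show (fun i => (σ i)⁻¹ * σ i) = fun _ => (1:ℝ) by
    funext i; exact inv_mul_cancel₀ (hσpos i).ne']
  rw [show diagonal (fun _ : Fin r => (1:ℝ)) = 1 by simp, Matrix.mul_one]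
  exact hYQQ.symm
open scoped MatrixOrder
/-- Every rank-`r` matrix admits a thin weighted SVD with respect to SPD weights
`E` and `D`: `X = Ũ Σ̃ Ṽᵀ` with `Ũᵀ E Ũ = I_r`, `Ṽᵀ D Ṽ = I_r`, and `Σ̃` diagonal with
strictly positive diagonal entries. -/
theorem thin_weighted_svd_exists (m n r : ℕ)
    (E : Matrix (Fin m) (Fin m) ℝ) (D : Matrix (Fin n) (Fin n) ℝ)
    (hE : E.PosDef) (hD : D.PosDef)
    (X : Matrix (Fin m) (Fin n) ℝ) (hX : X.rank = r) :
    ∃ (U : Matrix (Fin m) (Fin r) ℝ) (V : Matrix (Fin n) (Fin r) ℝ)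
      (S : Matrix (Fin r) (Fin r) ℝ),
      Uᵀ * E * U = 1 ∧ Vᵀ * D * V = 1 ∧
      (∀ i j : Fin r, i ≠ j → S i j = 0) ∧ (∀ i : Fin r, 0 < S i i) ∧
      X = U * S * Vᵀ := by
  classical
  have hEs := hE.posSemidef
  have hDs := hD.posSemidef
  set SE := CFC.sqrt E with hSEdef
  set SD := CFC.sqrt D with hSDdef
  have hSE2 : SE * SE = E := CFC.sqrt_mul_sqrt_self E hEs.nonneg
  have hSD2 : SD * SD = D := CFC.sqrt_mul_sqrt_self D hDs.nonneg
  have hSEt : SEᵀ = SE := by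
    rw [← conjTranspose_eq_transpose_of_trivial]; exact (CFC.sqrt_nonneg E).posSemidef.1
  have hSDt : SDᵀ = SD := by
    rw [← conjTranspose_eq_transpose_of_trivial]; exact (CFC.sqrt_nonneg D).posSemidef.1
  have hSEdet : IsUnit SE.det := by
    rw [isUnit_iff_ne_zero]
    intro h
    have : E.det = 0 := by rw [← hSE2, Matrix.det_mul, h, mul_zero]
    exact hE.det_pos.ne' this
  have hSDdet : IsUnit SD.det := by
    rw [isUnit_iff_ne_zero]
    intro h
    have : D.det = 0 := by rw [← hSD2, Matrix.det_mul, h, mul_zero]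
    exact hD.det_pos.ne' this
  have hSEi : SE⁻¹ * SE = 1 := Matrix.nonsing_inv_mul _ hSEdet
  have hSEi' : SE * SE⁻¹ = 1 := Matrix.mul_nonsing_inv _ hSEdet
  have hSDi : SD⁻¹ * SD = 1 := Matrix.nonsing_inv_mul _ hSDdet
  have hSDi' : SD * SD⁻¹ = 1 := Matrix.mul_nonsing_inv _ hSDdet
  have hSEit : (SE⁻¹)ᵀ = SE⁻¹ := by rw [Matrix.transpose_nonsing_inv, hSEt]
  have hSDit : (SD⁻¹)ᵀ = SD⁻¹ := by rw [Matrix.transpose_nonsing_inv, hSDt]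
  set Y : Matrix (Fin m) (Fin n) ℝ := SE * X * SD with hYdef
  have hYrank : Y.rank = r := by
    rw [hYdef, Matrix.mul_assoc, Matrix.rank_mul_eq_right_of_isUnit_det SE _ hSEdet,
      Matrix.rank_mul_eq_left_of_isUnit_det SD X hSDdet, hX]
  obtain ⟨P, Q, σ, hPtP, hQtQ, hσpos, hYPQ⟩ := thin_svd_exists_aux m n r Y hYrank
  refine ⟨SE⁻¹ * P, SD⁻¹ * Q, diagonal σ, ?_, ?_, ?_, ?_, ?_⟩
  · rw [Matrix.transpose_mul, hSEit]
    rw [show Pᵀ * SE⁻¹ * E * (SE⁻¹ * P) = Pᵀ * (SE⁻¹ * E * SE⁻¹) * P by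
      simp only [Matrix.mul_assoc]]
    rw [show SE⁻¹ * E * SE⁻¹ = 1 by
      rw [← hSE2, show SE⁻¹ * (SE * SE) * SE⁻¹ = SE⁻¹ * SE * (SE * SE⁻¹) by
        simp only [Matrix.mul_assoc], hSEi, hSEi', Matrix.one_mul]]
    rw [Matrix.mul_one, hPtP]
  · rw [Matrix.transpose_mul, hSDit]
    rw [show Qᵀ * SD⁻¹ * D * (SD⁻¹ * Q) = Qᵀ * (SD⁻¹ * D * SD⁻¹) * Q by
      simp only [Matrix.mul_assoc]]
    rw [show SD⁻¹ * D * SD⁻¹ = 1 by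
      rw [← hSD2, show SD⁻¹ * (SD * SD) * SD⁻¹ = SD⁻¹ * SD * (SD * SD⁻¹) by
        simp only [Matrix.mul_assoc], hSDi, hSDi', Matrix.one_mul]]
    rw [Matrix.mul_one, hQtQ]
  · intro i j hij; exact Matrix.diagonal_apply_ne _ hij
  · intro i; rw [Matrix.diagonal_apply_eq]; exact hσpos i
  · have hXY : X = SE⁻¹ * Y * SD⁻¹ := by
      rw [hYdef, show SE⁻¹ * (SE * X * SD) * SD⁻¹ = SE⁻¹ * SE * X * (SD * SD⁻¹) by
        simp only [Matrix.mul_assoc], hSEi, hSDi', Matrix.one_mul, Matrix.mul_one]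
    rw [hXY, hYPQ, Matrix.transpose_mul, hSDit]
    simp only [Matrix.mul_assoc]
end
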